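/- Let A be a unital C*-algebra, let a, g ∈ A with a ≥ 0 and 0 ≤ g ≤ 1, and let ε > 0. Then (a - ε)₊ is Cuntz subequivalent in M₂(A) to the diagonal element diag([(1-g)a(1-g) - ε]₊, g). -/

import Mathlib

open Filter Topology Matrix

/-- Cuntz subequivalence: `a ≾ b` iff there is a sequence `vₙ` with `vₙ b vₙ* → a`. -/
def CuntzSubequiv (A : Type*) [Mul A] [Star A] [TopologicalSpace A] (a b : A) : Prop :=
  ∃ v : ℕ → A, Tendsto (fun n => v n * b * star (v n)) atTop (𝓝 a)

/-- The cut-down `(a - ε)₊`, i.e. functional calculus of `a` with `λ ↦ max (λ - ε) 0`. -/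
noncomputable def cutDown {A : Type*} [CStarAlgebra A] (a : A) (ε : ℝ) : A :=
  cfc (fun t : ℝ => max (t - ε) 0) a

/-!
Write `a = x* x + w* w` with `x = (1 - g) a^(1/2)` and `w = (1 - (1 - g)²)^(1/2) a^(1/2)`.
Since `a - ε ≤ (x* x - ε)₊ + w* w`, we get `(a - ε)₊ ≾ (x* x - ε)₊ + w* w`, and in `M₂(A)` a sum
`e₁ + e₂` is dominated by `diag (e₁, e₂)`. Finally `(x* x - ε)₊ ≾ (x x* - ε)₊`, where
`x x* = (1 - g) a (1 - g)`, and `w* w ≾ w w* ≤ 2 ‖a‖ g`.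
Apart from `c ≤ d ⇒ c ≾ d`, each comparison `c ≾ d` in `A` comes from inequalities
`(c - δ)₊ ≤ u d u*` for all `δ > 0`, since `{c | c ≾ d}` is the closure of the set of conjugates
of `d` and `(c - δ)₊ → c`.
-/

instance Matrix.firstCountableTopology {m n R : Type*} [Countable m] [Countable n]
    [TopologicalSpace R] [FirstCountableTopology R] : FirstCountableTopology (Matrix m n R) :=
  inferInstanceAs (FirstCountableTopology (m → n → R))

namespace CuntzSubequiv

section Monoid

variable {A : Type*} [Monoid A] [StarMul A] [TopologicalSpace A]

theorem iff_mem_closure [FrechetUrysohnSpace A] {a b : A} :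
    CuntzSubequiv A a b ↔ a ∈ closure (Set.range fun v => v * b * star v) := by
  rw [mem_closure_iff_seq_limit]
  constructor
  · rintro ⟨v, hv⟩
    exact ⟨_, fun n => ⟨v n, rfl⟩, hv⟩
  · rintro ⟨x, hx, hlim⟩
    choose v hv using hx
    exact ⟨v, by simpa only [hv] using hlim⟩

theorem mul_mul_star (u b : A) : CuntzSubequiv A (u * b * star u) b :=
  ⟨fun _ => u, tendsto_const_nhds⟩

theorem refl (a : A) : CuntzSubequiv A a a := by
  simpa using mul_mul_star 1 a

theorem trans [ContinuousMul A] [FrechetUrysohnSpace A] {a b c : A}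
    (hab : CuntzSubequiv A a b) (hbc : CuntzSubequiv A b c) : CuntzSubequiv A a c := by
  rw [iff_mem_closure] at *
  refine closure_minimal ?_ isClosed_closure hab
  rintro _ ⟨v, rfl⟩
  refine map_mem_closure (f := fun x => v * x * star v) (by fun_prop) hbc ?_
  rintro _ ⟨u, rfl⟩
  exact ⟨v * u, by simp only [star_mul, mul_assoc]⟩

end Monoid

section Matrix

variable {A : Type*} [TopologicalSpace A]

theorem matrix_diagonal [NonUnitalSemiring A] [StarRing A] {n : Type*} [Fintype n]
    [DecidableEq n] {c d : n → A} (h : ∀ i, CuntzSubequiv A (c i) (d i)) :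
    CuntzSubequiv (Matrix n n A) (diagonal c) (diagonal d) := by
  choose v hv using h
  refine ⟨fun k => diagonal fun i => v i k, ?_⟩
  simp only [star_eq_conjTranspose, diagonal_conjTranspose, diagonal_mul_diagonal]
  exact (continuous_id.matrix_diagonal.tendsto _).comp (tendsto_pi_nhds.2 hv)

theorem diagonal_add_zero [Semiring A] [StarRing A] (e₁ e₂ : A) :
    CuntzSubequiv (Matrix (Fin 2) (Fin 2) A) (diagonal ![e₁ + e₂, 0]) (diagonal ![e₁, e₂]) := by
  have h : diagonal ![e₁ + e₂, 0]
      = !![1, 1; 0, 0] * diagonal ![e₁, e₂] * star !![(1 : A), 1; 0, 0] := by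
    ext i j
    fin_cases i <;> fin_cases j <;>
      simp [Matrix.mul_apply, Fin.sum_univ_two, Matrix.vecMul_diagonal]
  rw [h]
  exact mul_mul_star _ _

end Matrix

end CuntzSubequiv

section CStarAlgebra

variable {A : Type*} [CStarAlgebra A]

theorem cutDown_cutDown {a : A} (ha : IsSelfAdjoint a) (ε : ℝ) {δ : ℝ} (hδ : 0 ≤ δ) :
    cutDown (cutDown a ε) δ = cutDown a (ε + δ) := by
  rw [cutDown, cutDown, ← cfc_comp' (fun t : ℝ => max (t - δ) 0) (fun t : ℝ => max (t - ε) 0) a]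
  refine cfc_congr fun t _ => ?_
  simp only [sub_add_eq_sub_sub]
  rcases le_total t ε with h | h
  · simp [max_eq_right (sub_nonpos.2 h), max_eq_right (by linarith : t - ε - δ ≤ 0), hδ]
  · rw [max_eq_left (sub_nonneg.2 h)]

theorem cfc_sub_const {a : A} (ha : IsSelfAdjoint a) (ε : ℝ) :
    cfc (fun t : ℝ => t - ε) a = a - algebraMap ℝ A ε := by
  rw [cfc_sub .., cfc_id' ℝ a, cfc_const ε a]

theorem exists_isSelfAdjoint_mul_cfc_mul_eq_cfc {y : A} {F k : ℝ → ℝ} {m : ℝ} (hm : 0 < m)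
    (hF : Continuous F) (hk : Continuous k) (hF₀ : ∀ t, 0 ≤ F t)
    (hFk : ∀ t, 0 < F t → m ≤ k t) :
    ∃ e : A, IsSelfAdjoint e ∧ e * cfc k y * e = cfc F y := by
  set h : ℝ → ℝ := fun t => √(F t / max (k t) m)
  have hh : Continuous h := Real.continuous_sqrt.comp <|
    hF.div (hk.max continuous_const) fun t => (hm.trans_le (le_max_right _ _)).ne'
  have hhkh : ∀ t, h t * k t * h t = F t := by
    intro t
    rw [mul_right_comm, Real.mul_self_sqrt (div_nonneg (hF₀ t) (hm.le.trans (le_max_right _ _)))]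
    rcases (hF₀ t).eq_or_lt with hFt | hFt
    · rw [← hFt, zero_div, zero_mul]
    · rw [max_eq_left (hFk t hFt), div_mul_cancel₀ _ (hm.trans_le (hFk t hFt)).ne']
  refine ⟨cfc h y, cfc_predicate h y, ?_⟩
  rw [← cfc_mul h k y, ← cfc_mul _ h y]
  exact cfc_congr fun t _ => hhkh t

theorem CuntzSubequiv.smul_left {r : ℝ} (hr : 0 ≤ r) (d : A) : CuntzSubequiv A (r • d) d := by
  have h : r • d = (√r • (1 : A)) * d * star (√r • (1 : A)) := by
    rw [star_smul, star_one, star_trivial, smul_mul_assoc, one_mul, mul_smul_one, smul_smul,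
      Real.mul_self_sqrt hr]
  exact h ▸ mul_mul_star _ d

variable [PartialOrder A] [StarOrderedRing A]

theorem cutDown_nonneg (a : A) (ε : ℝ) : 0 ≤ cutDown a ε :=
  cfc_nonneg fun _ _ => le_max_right _ _

theorem cutDown_zero {a : A} (ha : 0 ≤ a) : cutDown a 0 = a := by
  rw [cutDown, cfc_congr (g := fun t => t) fun t ht => by
    simpa using spectrum_nonneg_of_nonneg ha ht, cfc_id' ℝ a]

theorem norm_cutDown_sub_le {a : A} (ha : 0 ≤ a) {δ : ℝ} (hδ : 0 ≤ δ) :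
    ‖cutDown a δ - a‖ ≤ δ := by
  nth_rw 2 [← cfc_id' ℝ a]
  rw [cutDown, ← cfc_sub ..]
  refine norm_cfc_le hδ fun t ht => ?_
  have ht₀ := spectrum_nonneg_of_nonneg ha ht
  rw [Real.norm_eq_abs, abs_le]
  rcases le_total t δ with h | h
  · rw [max_eq_right (sub_nonpos.2 h)]; constructor <;> linarith
  · rw [max_eq_left (sub_nonneg.2 h)]; constructor <;> linarith

theorem sub_algebraMap_le_cutDown {a : A} (ha : IsSelfAdjoint a) (ε : ℝ) :
    a - algebraMap ℝ A ε ≤ cutDown a ε := by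
  rw [← cfc_sub_const ha, cutDown]
  exact cfc_mono fun t _ => le_max_left _ _

theorem norm_cfc_resolvent_mul_self_le {d : A} (hd : 0 ≤ d) {μ : ℝ} (hμ : 0 < μ) :
    ‖cfc (fun t => μ / (|t| + μ)) d * d * cfc (fun t => μ / (|t| + μ)) d‖ ≤ μ / 4 := by
  have hk : Continuous fun t : ℝ => μ / (|t| + μ) :=
    continuous_const.div (by fun_prop) fun t => by positivity
  nth_rw 2 [← cfc_id' ℝ d]
  rw [← cfc_mul _ _ d hk.continuousOn, ← cfc_mul _ _ d (hg := hk.continuousOn)]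
  refine norm_cfc_le (by positivity) fun t ht => ?_
  have ht₀ := spectrum_nonneg_of_nonneg hd ht
  rw [abs_of_nonneg ht₀, Real.norm_of_nonneg (by positivity), div_mul_eq_mul_div,
    div_mul_div_comm, div_le_div_iff₀ (by positivity) (by norm_num)]
  nlinarith [sq_nonneg (t - μ)]

theorem cfc_inv_sqrt_mul_self_mul_eq_one_sub {d : A} (hd : 0 ≤ d) {μ : ℝ} (hμ : 0 < μ) :
    cfc (fun t => (√(|t| + μ))⁻¹) d * d * cfc (fun t => (√(|t| + μ))⁻¹) d
      = 1 - cfc (fun t => μ / (|t| + μ)) d := by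
  have hk : Continuous fun t : ℝ => μ / (|t| + μ) :=
    continuous_const.div (by fun_prop) fun t => by positivity
  have hg : Continuous fun t : ℝ => (√(|t| + μ))⁻¹ :=
    (Real.continuous_sqrt.comp (by fun_prop)).inv₀ fun t => (Real.sqrt_pos.2 (by positivity)).ne'
  nth_rw 2 [← cfc_id' ℝ d]
  rw [← cfc_mul _ _ d hg.continuousOn, ← cfc_mul _ _ d (hg := hg.continuousOn), ← cfc_one ℝ d,
    ← cfc_sub _ _ d (hg := hk.continuousOn)]
  refine cfc_congr fun t ht => ?_
  have ht₀ := spectrum_nonneg_of_nonneg hd ht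
  have hsq₀ : 0 < √(t + μ) := Real.sqrt_pos.2 (by positivity)
  simp only [Pi.one_apply, abs_of_nonneg ht₀]
  field_simp
  rw [Real.sq_sqrt (by positivity)]
  ring

theorem norm_sqrt_mul_cfc_resolvent_mul_sqrt_le {c d : A} (hc : 0 ≤ c) (hcd : c ≤ d) {μ : ℝ}
    (hμ : 0 < μ) :
    ‖CFC.sqrt c * cfc (fun t => μ / (|t| + μ)) d * CFC.sqrt c‖ ≤ ‖CFC.sqrt c‖ * √(μ / 4) := by
  set s := CFC.sqrt c
  set K := cfc (fun t => μ / (|t| + μ)) d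
  have hs : IsSelfAdjoint s := .of_nonneg (CFC.sqrt_nonneg c)
  have hK : IsSelfAdjoint K := cfc_predicate _ d
  have hss : s * s = c := CFC.sqrt_mul_sqrt_self c hc
  have hKs : ‖K * s‖ ^ 2 ≤ μ / 4 :=
    calc ‖K * s‖ ^ 2 = ‖K * c * K‖ := by
          rw [sq, ← CStarRing.norm_self_mul_star, star_mul, hs.star_eq, hK.star_eq, ← hss]
          simp only [mul_assoc]
      _ ≤ ‖K * d * K‖ := by
          refine CStarAlgebra.norm_le_norm_of_nonneg_of_le ?_ ?_
          · simpa [hK.star_eq] using star_left_conjugate_nonneg hc K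
          · simpa [hK.star_eq] using star_left_conjugate_le_conjugate hcd K
      _ ≤ μ / 4 := norm_cfc_resolvent_mul_self_le (hc.trans hcd) hμ
  calc ‖s * K * s‖ ≤ ‖s‖ * ‖K * s‖ := by rw [mul_assoc]; exact norm_mul_le _ _
    _ ≤ ‖s‖ * √(μ / 4) := by gcongr; exact Real.le_sqrt_of_sq_le hKs

/-- The conjugates of `d` by `c^(1/2) (d + μ)^(-1/2)` tend to `c` as `μ → 0⁺`. -/
theorem CuntzSubequiv.of_le {c d : A} (hc : 0 ≤ c) (hcd : c ≤ d) : CuntzSubequiv A c d := by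
  set s := CFC.sqrt c
  set K : ℝ → A := fun μ => cfc (fun t => μ / (|t| + μ)) d
  have hs : IsSelfAdjoint s := .of_nonneg (CFC.sqrt_nonneg c)
  have hss : s * s = c := CFC.sqrt_mul_sqrt_self c hc
  have hconj : ∀ μ > 0, ∃ v, v * d * star v = c - s * K μ * s := by
    intro μ hμ
    set g := cfc (fun t => (√(|t| + μ))⁻¹) d
    have hg : IsSelfAdjoint g := cfc_predicate _ d
    refine ⟨s * g, ?_⟩
    calc s * g * d * star (s * g) = s * (g * d * g) * s := by
          rw [star_mul, hs.star_eq, hg.star_eq]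
          simp only [mul_assoc]
      _ = c - s * K μ * s := by
          rw [cfc_inv_sqrt_mul_self_mul_eq_one_sub (hc.trans hcd) hμ, mul_sub, sub_mul, mul_one,
            hss]
  have hbound : Tendsto (fun μ : ℝ => ‖s‖ * √(μ / 4)) (𝓝[>] 0) (𝓝 0) :=
    tendsto_nhdsWithin_of_tendsto_nhds <|
      (by fun_prop : Continuous fun μ : ℝ => ‖s‖ * √(μ / 4)).tendsto' 0 0 (by simp)
  rw [iff_mem_closure]
  refine mem_closure_of_tendsto (b := 𝓝[>] 0) (f := fun μ => c - s * K μ * s) ?_ ?_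
  · rw [tendsto_iff_norm_sub_tendsto_zero]
    refine squeeze_zero' (.of_forall fun _ => norm_nonneg _) ?_ hbound
    filter_upwards [self_mem_nhdsWithin] with μ hμ
    simpa using norm_sqrt_mul_cfc_resolvent_mul_sqrt_le hc hcd hμ
  · filter_upwards [self_mem_nhdsWithin] with μ hμ using hconj μ hμ

theorem CuntzSubequiv.of_forall_cutDown {c d : A} (hc : 0 ≤ c)
    (h : ∀ δ > 0, CuntzSubequiv A (cutDown c δ) d) : CuntzSubequiv A c d := by
  simp only [iff_mem_closure] at h ⊢
  refine isClosed_closure.mem_of_tendsto (b := 𝓝[>] 0) ?_ (eventually_mem_nhdsWithin.mono h)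
  rw [tendsto_iff_norm_sub_tendsto_zero]
  refine squeeze_zero' (.of_forall fun _ => norm_nonneg _) ?_
    (tendsto_nhdsWithin_of_tendsto_nhds tendsto_id)
  filter_upwards [self_mem_nhdsWithin] with δ hδ using norm_cutDown_sub_le hc (le_of_lt hδ)

theorem CuntzSubequiv.of_le_mul_mul_star {c d : A} (u : A) (hc : 0 ≤ c) (h : c ≤ u * d * star u) :
    CuntzSubequiv A c d :=
  (of_le hc h).trans (mul_mul_star u d)

theorem cutDown_subequiv_of_sub_le {a b : A} (ha : IsSelfAdjoint a) {ε : ℝ}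
    (h : a - algebraMap ℝ A ε ≤ b) : CuntzSubequiv A (cutDown a ε) b := by
  refine .of_forall_cutDown (cutDown_nonneg a ε) fun δ hδ => ?_
  obtain ⟨e, he, hee⟩ := exists_isSelfAdjoint_mul_cfc_mul_eq_cfc (y := a)
    (F := fun t => max (t - (ε + δ)) 0) (k := fun t => t - ε) hδ (by fun_prop) (by fun_prop)
    (fun _ => le_max_right _ _) fun t ht => by
      linarith [(lt_max_iff.1 ht).resolve_right (lt_irrefl 0)]
  rw [cutDown_cutDown ha ε hδ.le]
  refine .of_le_mul_mul_star e (cutDown_nonneg a _) ?_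
  calc cutDown a (ε + δ) = e * (a - algebraMap ℝ A ε) * e := by
        rw [cutDown, ← hee, cfc_sub_const ha]
    _ ≤ e * b * star e := by rw [he.star_eq]; exact he.conjugate_le_conjugate h

theorem cutDown_star_mul_self_subequiv (x : A) {ε : ℝ} (hε : 0 ≤ ε) :
    CuntzSubequiv A (cutDown (star x * x) ε) (cutDown (x * star x) ε) := by
  have hy : IsSelfAdjoint (star x * x) := .star_mul_self x
  refine .of_forall_cutDown (cutDown_nonneg _ ε) fun δ hδ => ?_
  obtain ⟨e, he, hee⟩ := exists_isSelfAdjoint_mul_cfc_mul_eq_cfc (y := star x * x)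
    (F := fun t => max (t - (ε + δ)) 0) (k := fun t => t * (t - ε))
    (by positivity : 0 < (ε + δ) * δ) (by fun_prop) (by fun_prop) (fun _ => le_max_right _ _)
    fun t ht => by nlinarith [(lt_max_iff.1 ht).resolve_right (lt_irrefl 0)]
  rw [cutDown_cutDown hy ε hδ.le]
  refine .of_le_mul_mul_star (e * star x) (cutDown_nonneg _ _) ?_
  have hk : cfc (fun t : ℝ => t * (t - ε)) (star x * x)
      = star x * (x * star x - algebraMap ℝ A ε) * x := by
    rw [cfc_mul (fun t : ℝ => t) _, cfc_id' ℝ _, cfc_sub_const hy, Algebra.algebraMap_eq_smul_one]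
    simp only [mul_sub, sub_mul, mul_smul_comm, smul_mul_assoc, mul_one, mul_assoc]
  calc cutDown (star x * x) (ε + δ) = e * (star x * (x * star x - algebraMap ℝ A ε) * x) * e := by
        rw [cutDown, ← hee, hk]
    _ ≤ e * (star x * cutDown (x * star x) ε * x) * e :=
        he.conjugate_le_conjugate <| star_left_conjugate_le_conjugate
          (sub_algebraMap_le_cutDown (.mul_star_self x) ε) x
    _ = e * star x * cutDown (x * star x) ε * star (e * star x) := by
        rw [star_mul, star_star, he.star_eq]; simp only [mul_assoc]

theorem star_mul_self_subequiv (x : A) : CuntzSubequiv A (star x * x) (x * star x) := by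
  simpa only [cutDown_zero (star_mul_self_nonneg x), cutDown_zero (mul_star_self_nonneg x)]
    using cutDown_star_mul_self_subequiv x le_rfl

theorem exists_decomposition_of_nonneg_of_le_one {a g : A} (ha : 0 ≤ a) (hg₀ : 0 ≤ g)
    (hg₁ : g ≤ 1) : ∃ x w : A, x * star x = (1 - g) * a * (1 - g) ∧
      star x * x + star w * w = a ∧ w * star w ≤ (2 * ‖a‖) • g := by
  set s := CFC.sqrt a
  have hs : IsSelfAdjoint s := .of_nonneg (CFC.sqrt_nonneg a)
  have hss : s * s = a := CFC.sqrt_mul_sqrt_self a ha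
  set p := 1 - (1 - g) ^ 2
  have hp₀ : 0 ≤ p := by
    have h : (1 - g) ^ 2 ≤ (1 - g) ^ 1 :=
      CStarAlgebra.pow_antitone (sub_nonneg.2 hg₁) (sub_le_self 1 hg₀) one_le_two
    rw [pow_one] at h
    exact sub_nonneg.2 (h.trans (sub_le_self 1 hg₀))
  have hp : p ≤ (2 : ℝ) • g := by
    have h : p = (2 : ℝ) • g - g ^ 2 := by simp only [p, two_smul]; noncomm_ring
    exact h ▸ sub_le_self _ (CStarAlgebra.pow_nonneg hg₀ 2)
  set q := CFC.sqrt p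
  have hq : IsSelfAdjoint q := .of_nonneg (CFC.sqrt_nonneg p)
  have hqq : q * q = p := CFC.sqrt_mul_sqrt_self p hp₀
  have hr : IsSelfAdjoint (1 - g) := .of_nonneg (sub_nonneg.2 hg₁)
  refine ⟨(1 - g) * s, q * s, ?_, ?_, ?_⟩
  · rw [star_mul, hs.star_eq, hr.star_eq, ← hss]
    simp only [mul_assoc]
  · rw [star_mul, star_mul, hs.star_eq, hr.star_eq, hq.star_eq]
    calc s * (1 - g) * ((1 - g) * s) + s * q * (q * s) = s * ((1 - g) ^ 2 + q * q) * s := by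
          noncomm_ring
      _ = a := by rw [hqq, add_sub_cancel, mul_one, hss]
  · rw [star_mul, hs.star_eq, hq.star_eq]
    calc q * s * (s * q) = star q * a * q := by rw [hq.star_eq, ← hss]; simp only [mul_assoc]
      _ ≤ ‖a‖ • (star q * q) := CStarAlgebra.star_left_conjugate_le_norm_smul
      _ ≤ ‖a‖ • ((2 : ℝ) • g) := by
          rw [hq.star_eq, hqq]; exact smul_le_smul_of_nonneg_left hp (norm_nonneg a)
      _ = (2 * ‖a‖) • g := by rw [smul_smul, mul_comm]

end CStarAlgebra

/-- Lemma 1.8: for `a ≥ 0`, `0 ≤ g ≤ 1` and `ε > 0`, the element `(a - ε)₊` is Cuntz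
subequivalent in `M₂(A)` to `diag ([(1-g) a (1-g) - ε]₊, g)`. -/
theorem cutDown_subequiv_diag {A : Type*} [CStarAlgebra A]
    [PartialOrder A] [StarOrderedRing A]
    (a g : A) (ha : 0 ≤ a) (hg0 : 0 ≤ g) (hg1 : g ≤ 1) (ε : ℝ) (hε : 0 < ε) :
    CuntzSubequiv (Matrix (Fin 2) (Fin 2) A)
      (Matrix.diagonal ![cutDown a ε, 0])
      (Matrix.diagonal ![cutDown ((1 - g) * a * (1 - g)) ε, g]) := by
  obtain ⟨x, w, hxx, hsum, hww⟩ := exists_decomposition_of_nonneg_of_le_one ha hg0 hg1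
  have ha_split : CuntzSubequiv A (cutDown a ε) (cutDown (star x * x) ε + star w * w) := by
    refine cutDown_subequiv_of_sub_le ha.isSelfAdjoint ?_
    calc a - algebraMap ℝ A ε = (star x * x - algebraMap ℝ A ε) + star w * w := by
          rw [← hsum]; abel
      _ ≤ cutDown (star x * x) ε + star w * w :=
          add_le_add_left (sub_algebraMap_le_cutDown (.star_mul_self x) ε) _
  have hx : CuntzSubequiv A (cutDown (star x * x) ε) (cutDown ((1 - g) * a * (1 - g)) ε) :=
    hxx ▸ cutDown_star_mul_self_subequiv x hε.le
  have hw : CuntzSubequiv A (star w * w) g :=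
    (star_mul_self_subequiv w).trans <|
      (CuntzSubequiv.of_le (mul_star_self_nonneg w) hww).trans (.smul_left (by positivity) g)
  have hM₁ : CuntzSubequiv (Matrix (Fin 2) (Fin 2) A) (diagonal ![cutDown a ε, 0])
      (diagonal ![cutDown (star x * x) ε + star w * w, 0]) :=
    .matrix_diagonal (Fin.forall_fin_two.2 ⟨ha_split, .refl 0⟩)
  have hM₂ : CuntzSubequiv (Matrix (Fin 2) (Fin 2) A)
      (diagonal ![cutDown (star x * x) ε, star w * w])
      (diagonal ![cutDown ((1 - g) * a * (1 - g)) ε, g]) :=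
    .matrix_diagonal (Fin.forall_fin_two.2 ⟨hx, hw⟩)
  exact (hM₁.trans (.diagonal_add_zero _ _)).trans hM₂
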